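/- On the cotangent bundle of the unit sphere realized by x, π ∈ ℝ³ with |x| = 1, ⟨x,π⟩ = 0, {π_i, x_j} = δ_{ij} − x_i x_j (Dirac bracket), the two functions H̃₁ = ¼⟨J,J⟩ − ⟨x,Bx⟩(γ + δ⟨x,Bx⟩) + δ⟨x,A^∨x⟩ and H̃₂ = −¼⟨J,AJ⟩ + ⟨x,A^∨x⟩(γ + δ⟨x,Bx⟩), where J = π×x, are in involution: {H̃₁, H̃₂} = 0. -/

import Mathlib

open scoped BigOperators

abbrev V3 := Fin 3 → ℝ
abbrev Ph := V3 × V3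

noncomputable def eps (i j k : Fin 3) : ℝ :=
  (((j : ℤ) - (i : ℤ)) * ((k : ℤ) - (j : ℤ)) * ((k : ℤ) - (i : ℤ)) : ℤ) / 2

def dot (u v : V3) : ℝ := ∑ i, u i * v i

def cross (u v : V3) : V3 :=
  ![u 1 * v 2 - u 2 * v 1, u 2 * v 0 - u 0 * v 2, u 0 * v 1 - u 1 * v 0]

/-- derivative in the direction of the i-th coordinate of the first factor -/
noncomputable def Dp (i : Fin 3) (F : Ph → ℝ) (z : Ph) : ℝ :=
  fderiv ℝ F z (Pi.single i 1, 0)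

/-- derivative in the direction of the i-th coordinate of the second factor -/
noncomputable def DM (i : Fin 3) (F : Ph → ℝ) (z : Ph) : ℝ :=
  fderiv ℝ F z (0, Pi.single i 1)

/-- e(3) Lie–Poisson bracket on functions of z = (p, M):
{M_i,M_j} = ε_{ijk} M_k, {M_i,p_j} = ε_{ijk} p_k, {p_i,p_j} = 0. -/
noncomputable def pb1 (F G : Ph → ℝ) (z : Ph) : ℝ :=
  ∑ i, ∑ j, ∑ k, eps i j k *
    ( z.2 k * DM i F z * DM j G z
    + z.1 k * (DM i F z * Dp j G z + Dp i F z * DM j G z) )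
/-- H̃₁ = ¼⟨J,J⟩ − ⟨x,Bx⟩(γ + δ⟨x,Bx⟩) + δ⟨x,A^∨x⟩ with
A = diag(a₁,a₂,a₃), B = diag(a₂+a₃,a₃+a₁,a₁+a₂), A^∨ = diag(a₂a₃,a₃a₁,a₁a₂);
here z = (x, J). -/
noncomputable def Ht1 (a : Fin 3 → ℝ) (γ δ : ℝ) (z : Ph) : ℝ :=
  (1/4) * dot z.2 z.2
  - dot z.1 (fun i => (a (i+1) + a (i+2)) * z.1 i) *
      (γ + δ * dot z.1 (fun i => (a (i+1) + a (i+2)) * z.1 i))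
  + δ * dot z.1 (fun i => (a (i+1) * a (i+2)) * z.1 i)

/-- H̃₂ = −¼⟨J,AJ⟩ + ⟨x,A^∨x⟩(γ + δ⟨x,Bx⟩). -/
noncomputable def Ht2 (a : Fin 3 → ℝ) (γ δ : ℝ) (z : Ph) : ℝ :=
  -(1/4) * dot z.2 (fun i => a i * z.2 i)
  + dot z.1 (fun i => (a (i+1) * a (i+2)) * z.1 i) *
      (γ + δ * dot z.1 (fun i => (a (i+1) + a (i+2)) * z.1 i))

/-! The e(3) bracket reads `{F, G} = ⟨J, ∇_J F × ∇_J G⟩ + ⟨x, ∇_J F × ∇_x G + ∇_x F × ∇_J G⟩`.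
Both Hamiltonians split as a quadratic form in `J` plus a potential in `x` that is a polynomial in
the quadratic forms `⟨x, Bx⟩` and `⟨x, A^∨x⟩`, so all gradients are explicit and the bracket
becomes a polynomial in `(x, J)`. Its `γ`-part vanishes identically, and its `δ`-part lies in the
ideal generated by the Casimirs `|x|² - 1` and `⟨x, J⟩`. -/

noncomputable def dotL (u : V3) : V3 →L[ℝ] ℝ := ∑ i, u i • ContinuousLinearMap.proj i

@[simp]
lemma dotL_apply (u h : V3) : dotL u h = dot u h := by
  simp [dotL, dot]

@[simp]
lemma dot_single (u : V3) (i : Fin 3) : dot u (Pi.single i 1) = u i :=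
  dotProduct_single_one u i

@[simp]
lemma dot_zero (u : V3) : dot u 0 = 0 :=
  dotProduct_zero u

def quadForm (c v : V3) : ℝ := dot v (c * v)

lemma hasFDerivAt_quadForm (c v : V3) :
    HasFDerivAt (quadForm c) (dotL ((2 : ℝ) • (c * v))) v := by
  have hcoord (i : Fin 3) :
      HasFDerivAt (fun w : V3 => w i) (ContinuousLinearMap.proj i : V3 →L[ℝ] ℝ) v :=
    hasFDerivAt_apply i v
  have hsum := HasFDerivAt.fun_sum (u := Finset.univ) fun i _ =>
    (hcoord i).mul ((hcoord i).const_mul (c i))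
  refine hsum.congr_fderiv ?_
  ext h
  simp only [add_apply, smul_apply, ContinuousLinearMap.proj_apply, smul_eq_mul, dotL_apply, dot,
    Pi.smul_apply, Pi.mul_apply, Fin.sum_univ_three]
  ring

-- The diagonals of `B` and of `A^∨ = adj A` for `A = diag a`.
def diagB (a : V3) : V3 := fun i => a (i+1) + a (i+2)

def diagAdj (a : V3) : V3 := fun i => a (i+1) * a (i+2)

def pot1 (a : V3) (γ δ : ℝ) (x : V3) : ℝ :=
  -quadForm (diagB a) x * (γ + δ * quadForm (diagB a) x) + δ * quadForm (diagAdj a) x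

def pot2 (a : V3) (γ δ : ℝ) (x : V3) : ℝ :=
  quadForm (diagAdj a) x * (γ + δ * quadForm (diagB a) x)

lemma Ht1_eq (a : V3) (γ δ : ℝ) :
    Ht1 a γ δ = fun z => pot1 a γ δ z.1 + quadForm (fun _ => 1/4) z.2 := by
  funext z
  simp only [Ht1, pot1, quadForm, diagB, diagAdj, dot, Pi.mul_apply, Fin.sum_univ_three]
  ring

lemma Ht2_eq (a : V3) (γ δ : ℝ) :
    Ht2 a γ δ = fun z => pot2 a γ δ z.1 + quadForm (-(1/4 : ℝ) • a) z.2 := by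
  funext z
  simp only [Ht2, pot2, quadForm, diagB, diagAdj, dot, Pi.mul_apply, Pi.smul_apply,
    smul_eq_mul, Fin.sum_univ_three]
  ring

lemma hasFDerivAt_pot1 (a : V3) (γ δ : ℝ) (x : V3) :
    HasFDerivAt (pot1 a γ δ)
      (dotL ((-2 * (γ + 2 * δ * quadForm (diagB a) x)) • (diagB a * x)
        + (2 * δ) • (diagAdj a * x))) x := by
  have hB := hasFDerivAt_quadForm (diagB a) x
  have hA := hasFDerivAt_quadForm (diagAdj a) x
  refine (hB.neg.mul ((hB.const_mul δ).const_add γ) |>.add (hA.const_mul δ)).congr_fderiv ?_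
  ext h
  simp only [add_apply, smul_apply, neg_apply, dotL_apply, dot, Pi.add_apply, Pi.smul_apply,
    Pi.neg_apply, Pi.mul_apply, smul_eq_mul, Fin.sum_univ_three]
  ring

lemma hasFDerivAt_pot2 (a : V3) (γ δ : ℝ) (x : V3) :
    HasFDerivAt (pot2 a γ δ)
      (dotL ((2 * (γ + δ * quadForm (diagB a) x)) • (diagAdj a * x)
        + (2 * δ * quadForm (diagAdj a) x) • (diagB a * x))) x := by
  have hB := hasFDerivAt_quadForm (diagB a) x
  have hA := hasFDerivAt_quadForm (diagAdj a) x
  refine (hA.mul ((hB.const_mul δ).const_add γ)).congr_fderiv ?_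
  ext h
  simp only [add_apply, smul_apply, dotL_apply, dot, Pi.add_apply, Pi.smul_apply,
    Pi.mul_apply, smul_eq_mul, Fin.sum_univ_three]
  ring

noncomputable def gradP (F : Ph → ℝ) (z : Ph) : V3 := fun i => Dp i F z

noncomputable def gradM (F : Ph → ℝ) (z : Ph) : V3 := fun i => DM i F z

section Separable

variable {φ ψ : V3 → ℝ} {u w : V3} {z : Ph}

lemma hasFDerivAt_fst_add_snd (hφ : HasFDerivAt φ (dotL u) z.1)
    (hψ : HasFDerivAt ψ (dotL w) z.2) :
    HasFDerivAt (fun z : Ph => φ z.1 + ψ z.2)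
      ((dotL u).comp (ContinuousLinearMap.fst ℝ V3 V3)
        + (dotL w).comp (ContinuousLinearMap.snd ℝ V3 V3)) z :=
  (hφ.comp z hasFDerivAt_fst).add (hψ.comp z hasFDerivAt_snd)

lemma gradP_fst_add_snd (hφ : HasFDerivAt φ (dotL u) z.1) (hψ : HasFDerivAt ψ (dotL w) z.2) :
    gradP (fun z : Ph => φ z.1 + ψ z.2) z = u := by
  funext i
  simp [gradP, Dp, (hasFDerivAt_fst_add_snd hφ hψ).fderiv]

lemma gradM_fst_add_snd (hφ : HasFDerivAt φ (dotL u) z.1) (hψ : HasFDerivAt ψ (dotL w) z.2) :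
    gradM (fun z : Ph => φ z.1 + ψ z.2) z = w := by
  funext i
  simp [gradM, DM, (hasFDerivAt_fst_add_snd hφ hψ).fderiv]

end Separable

lemma pb1_eq_cross (F G : Ph → ℝ) (z : Ph) :
    pb1 F G z = dot z.2 (cross (gradM F z) (gradM G z))
      + dot z.1 (cross (gradM F z) (gradP G z) + cross (gradP F z) (gradM G z)) := by
  simp only [pb1, eps, dot, cross, gradP, gradM, Fin.sum_univ_three, Pi.add_apply,
    Matrix.cons_val_zero, Matrix.cons_val_one, Matrix.cons_val, Fin.val_zero, Fin.val_one,
    Fin.val_two]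
  push_cast
  ring

/-- On the symplectic leaf |x| = 1, ⟨x,J⟩ = 0 of e(3) (with coordinates (x,J),
J = π×x realizing T*S²), the Hamiltonians H̃₁ and H̃₂ are in involution. -/
theorem sphere_hamiltonians_involution (a : Fin 3 → ℝ) (γ δ : ℝ) (z : Ph)
    (hx : dot z.1 z.1 = 1) (hxJ : dot z.1 z.2 = 0) :
    pb1 (Ht1 a γ δ) (Ht2 a γ δ) z = 0 := by
  have h1 := hasFDerivAt_pot1 a γ δ z.1
  have h2 := hasFDerivAt_pot2 a γ δ z.1
  have k1 := hasFDerivAt_quadForm (fun _ => 1/4) z.2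
  have k2 := hasFDerivAt_quadForm (-(1/4 : ℝ) • a) z.2
  rw [pb1_eq_cross, Ht1_eq, Ht2_eq, gradP_fst_add_snd h1 k1, gradM_fst_add_snd h1 k1,
    gradP_fst_add_snd h2 k2, gradM_fst_add_snd h2 k2]
  obtain ⟨x, J⟩ := z
  simp only [dot, Fin.sum_univ_three] at hx hxJ
  simp only [dot, cross, quadForm, diagB, diagAdj, Fin.sum_univ_three, Pi.add_apply,
    Pi.smul_apply, Pi.mul_apply, smul_eq_mul, Matrix.cons_val_zero, Matrix.cons_val_one,
    Matrix.cons_val, Fin.reduceAdd]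
  linear_combination
    (δ * ((a 0)^2 * (a 1 - a 2) * x 1 * x 2 * J 0
        + (a 1)^2 * (a 2 - a 0) * x 0 * x 2 * J 1
        + (a 2)^2 * (a 0 - a 1) * x 0 * x 1 * J 2)) * hx
    + (δ * x 0 * x 1 * x 2 *
        ((a 0 - a 1) * (a 1 - a 2) * (a 2 - a 0))) * hxJ
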